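/- arXiv:1804.07367 — 4 statements merged into one kernel-verified Lean document; each statement's English description precedes it below -/
import Mathlib

section
/- If k and k' are Brauer equivalent number fields (i.e., there is an isomorphism Φ between Br(k) and Br(k') commuting with all restriction maps from common subfields and to common overfields), then [k:ℚ] = [k':ℚ]. -/
/- Preliminary definitions: an abstract Brauer-group theory (the Brauer group
functor together with restriction maps and the class map on algebras), Brauer
equivalence of number fields, quaternion algebras, ramification at finite and
infinite places, splitting of rational primes, orders, etc. -/

open NumberField Module IsDedekindDomain
open scoped TensorProduct

noncomputable section

/-- An assignment, to every field, of its Brauer group, together with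
restriction maps induced by field embeddings and the map sending a central
simple algebra to its Brauer class. -/
structure BrauerTheory : Type 1 where
  /-- the Brauer group of a field -/
  Br : ∀ (K : Type) [Field K], CommGrpCat.{0}
  /-- restriction along a field embedding, `[B] ↦ [B ⊗ K]` -/
  res : ∀ {F K : Type} [Field F] [Field K], (F →+* K) → (Br F ⟶ Br K)
  /-- the Brauer class of a central simple algebra -/
  cls : ∀ (K : Type) [Field K] (A : Type) [Ring A] [Algebra K A], Br K

/-- Two number fields `k` and `k'` are *Brauer equivalent* if there is an
isomorphism of their Brauer groups commuting with the restriction maps coming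
from all common subfields and with the restriction maps to all common
overfields. -/
def BrauerEquivalent (T : BrauerTheory) (k k' : Type) [Field k] [Field k'] : Prop :=
  ∃ Φ : T.Br k ≃* T.Br k',
    (∀ (F : Type) [Field F] [NumberField F] [Algebra F k] [Algebra F k'] (x : T.Br F),
        Φ (T.res (algebraMap F k) x) = T.res (algebraMap F k') x) ∧
    (∀ (L : Type) [Field L] [NumberField L] [Algebra k L] [Algebra k' L] (x : T.Br k),
        T.res (algebraMap k' L) (Φ x) = T.res (algebraMap k L) x)

/-- A quaternion algebra over `F` : a 4-dimensional central simple `F`-algebra. -/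
def IsQuaternionAlgebra (F A : Type) [Field F] [Ring A] [Algebra F A] : Prop :=
  Algebra.IsCentral F A ∧ IsSimpleRing A ∧ Module.finrank F A = 4

/-- An `F`-algebra `A` is ramified at a finite place `v` of the number field `F`
if `A ⊗_F F_v` is a division algebra. -/
def RamifiedAtFin (F : Type) [Field F] [NumberField F]
    (A : Type) [Ring A] [Algebra F A]
    (v : HeightOneSpectrum (𝓞 F)) : Prop :=
  ∀ x : (v.adicCompletion F) ⊗[F] A, x ≠ 0 → IsUnit x

/-- An `F`-algebra `A` is ramified at an infinite place `v` of the number field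
`F` if `A ⊗_F F_v` is a division algebra. -/
def RamifiedAtInf (F : Type) [Field F] [NumberField F]
    (A : Type) [Ring A] [Algebra F A]
    (v : InfinitePlace F) : Prop :=
  ∀ x : v.Completion ⊗[F] A, x ≠ 0 → IsUnit x

/-- The set of (nonzero) primes of the ring of integers of `K` lying above the
rational prime `p`. -/
def PrimesOver (K : Type) [Field K] (p : ℕ) : Set (Ideal (𝓞 K)) :=
  {P | P.IsPrime ∧ P ≠ ⊥ ∧ (p : 𝓞 K) ∈ P}

/-- The inertia degree `f(P/p)` of a prime `P` of `K` over the rational prime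
`p`, computed as the multiplicity of `p` in the cardinality of the residue
field. -/
def inertiaDegOver (K : Type) [Field K] (p : ℕ) (P : Ideal (𝓞 K)) : ℕ :=
  (Nat.card ((𝓞 K) ⧸ P)).factorization p

/-- The ramification index `e(P/p)` of a prime `P` of `K` over the rational
prime `p`. -/
def ramIdxOver (K : Type) [Field K] (p : ℕ) (P : Ideal (𝓞 K)) : ℕ :=
  Ideal.ramificationIdx' (Ideal.span {(p : ℤ)}) P

/-- A rational prime `p` is unramified in the number field `K`. -/
def UnramifiedIn (K : Type) [Field K] (p : ℕ) : Prop :=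
  ∀ P ∈ PrimesOver K p, ramIdxOver K p P = 1

/-- A rational prime `p` splits completely in the number field `K`. -/
def SplitsCompletely (K : Type) [Field K] (p : ℕ) : Prop :=
  ∀ P ∈ PrimesOver K p, ramIdxOver K p P = 1 ∧ inertiaDegOver K p P = 1

/-- A finite prime `v` of `F` splits completely in the extension `K/F`. -/
def SplitsCompletelyAt (F K : Type) [Field F] [Field K] [Algebra F K]
    (v : Ideal (𝓞 F)) : Prop :=
  ∀ P : Ideal (𝓞 K), P.IsPrime → P ≠ ⊥ → P.comap (algebraMap (𝓞 F) (𝓞 K)) = v →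
    Ideal.ramificationIdx' v P = 1 ∧
    Ideal.inertiaDeg' v P = 1

/-- A finite prime `v` of `F` is unramified in the extension `K/F`. -/
def UnramifiedAtRel (F K : Type) [Field F] [Field K] [Algebra F K]
    (v : Ideal (𝓞 F)) : Prop :=
  ∀ P : Ideal (𝓞 K), P.IsPrime → P ≠ ⊥ → P.comap (algebraMap (𝓞 F) (𝓞 K)) = v →
    Ideal.ramificationIdx' v P = 1

/-- The local degree `[K_P : F_v] = e(P/v) · f(P/v)` of the extension `K/F` at a
prime `P` of `K` lying over the prime `v` of `F`. -/
def localDegreeAt (F K : Type) [Field F] [Field K] [Algebra F K]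
    (v : Ideal (𝓞 F)) (P : Ideal (𝓞 K)) : ℕ :=
  Ideal.ramificationIdx' v P *
    Ideal.inertiaDeg' v P

/-- The Galois kernel of a number field `k`: the maximal subfield of `k` which
is Galois over `ℚ`. -/
def galoisKernel (k : Type) [Field k] [NumberField k] : IntermediateField ℚ k :=
  ⨆ E ∈ {E : IntermediateField ℚ k | IsGalois ℚ E}, E

/-- An `𝓞 K`-order in a `K`-algebra `A` : a subring which is an `𝓞 K`-submodule,
finitely generated as a `ℤ`-module, and containing a `K`-basis of `A`. -/
def IsOrder (K A : Type) [Field K] [Ring A] [Algebra K A] (O : Subring A) : Prop :=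
  (∀ (c : 𝓞 K), ∀ x ∈ O, algebraMap K A (algebraMap (𝓞 K) K c) * x ∈ O) ∧
  (∃ s : Finset A, ((Submodule.span ℤ (s : Set A) : Submodule ℤ A) : Set A) = (O : Set A)) ∧
  Submodule.span K (O : Set A) = ⊤

/-- A maximal order in a `K`-algebra `A`. -/
def IsMaximalOrder (K A : Type) [Field K] [Ring A] [Algebra K A] (O : Subring A) : Prop :=
  IsOrder K A O ∧ ∀ O' : Subring A, IsOrder K A O' → O ≤ O' → O' = O

/-- A totally positive element of a number field. -/
def TotallyPositive (K : Type) [Field K] (a : K) : Prop :=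
  ∀ φ : K →+* ℂ, ComplexEmbedding.IsReal φ → 0 < (φ a).re

/-- A number field has narrow class number one : every nonzero ideal of its ring
of integers is generated by a totally positive element. -/
def NarrowClassNumberOne (K : Type) [Field K] : Prop :=
  ∀ I : Ideal (𝓞 K), I ≠ ⊥ →
    ∃ a : 𝓞 K, I = Ideal.span {a} ∧ TotallyPositive K (algebraMap (𝓞 K) K a)

/-! Let `L` be a finite extension that is Galois over both `k` and `k'`. Since `Φ` and `Φ⁻¹`
commute with restriction to `L`, they send classes split by `L` to classes split by `L`, preserving
orders. As `Br(L/K)` contains a class of order `[L:K]` and all its orders divide `[L:K]`, this forces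
`[L:k] = [L:k']`, hence `[k:ℚ] = [k':ℚ]` by the tower law. -/

universe u

open IntermediateField in
theorem exists_common_isGalois_extension (F : Type u) (K K' : Type*) [Field F] [PerfectField F]
    [Field K] [Field K'] [Algebra F K] [Algebra F K'] [FiniteDimensional F K]
    [FiniteDimensional F K'] :
    ∃ (L : Type u) (_ : Field L) (_ : Algebra F L) (_ : Algebra K L) (_ : Algebra K' L),
      IsScalarTower F K L ∧ IsScalarTower F K' L ∧ FiniteDimensional F L ∧ IsGalois F L := by
  let L := normalClosure F K (AlgebraicClosure F) ⊔ normalClosure F K' (AlgebraicClosure F)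
  let f : K →ₐ[F] L := IsAlgClosed.lift.codRestrict L.toSubalgebra fun x ↦
    le_sup_left (b := normalClosure F K' _) (AlgHom.fieldRange_le_normalClosure _ ⟨x, rfl⟩)
  let g : K' →ₐ[F] L := IsAlgClosed.lift.codRestrict L.toSubalgebra fun x ↦
    le_sup_right (a := normalClosure F K _) (AlgHom.fieldRange_le_normalClosure _ ⟨x, rfl⟩)
  let := f.toAlgebra
  let := g.toAlgebra
  exact ⟨L, _, _, _, _, .of_algebraMap_eq fun x ↦ (f.commutes x).symm,
    .of_algebraMap_eq fun x ↦ (g.commutes x).symm, inferInstance, ⟨⟩⟩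

theorem NumberField.exists_common_isGalois_extension (k k' : Type) [Field k] [Field k']
    [NumberField k] [NumberField k'] :
    ∃ (L : Type) (_ : Field L) (_ : NumberField L) (_ : Algebra k L) (_ : Algebra k' L),
      IsGalois k L ∧ IsGalois k' L := by
  obtain ⟨L, _, _, _, _, _, _, _, _⟩ := _root_.exists_common_isGalois_extension ℚ k k'
  have : Module.Finite k L := .of_restrictScalars_finite ℚ k L
  exact ⟨L, _, .of_module_finite k L, _, _, .tower_top_of_isGalois ℚ k L,
    .tower_top_of_isGalois ℚ k' L⟩

theorem BrauerTheory.finrank_dvd_of_res_comp_mulEquiv (T : BrauerTheory) {K K' L : Type}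
    [Field K] [Field K'] [Field L] [Algebra K L] [Algebra K' L] (Φ : T.Br K ≃* T.Br K')
    (hΦ : ∀ x, T.res (algebraMap K' L) (Φ x) = T.res (algebraMap K L) x)
    (hdiv : ∃ D : T.Br K, T.res (algebraMap K L) D = 1 ∧ orderOf D = finrank K L)
    (hexp : ∀ D : T.Br K', T.res (algebraMap K' L) D = 1 → orderOf D ∣ finrank K' L) :
    finrank K L ∣ finrank K' L := by
  obtain ⟨D, hD, hord⟩ := hdiv
  rw [← hord, ← Φ.orderOf_eq D]
  exact hexp (Φ D) ((hΦ D).trans hD)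

/-- If `k` and `k'` are Brauer equivalent number fields, then
`[k : ℚ] = [k' : ℚ]`.  The two auxiliary hypotheses record the classical facts
that for a finite Galois extension `L/K` of number fields the relative Brauer
group `Br(L/K)` contains a class of order `[L:K]`, and that (since index equals
exponent over number fields) the order of any class split by `L` divides
`[L:K]`. -/
theorem brauerEquivalent_finrank_eq (T : BrauerTheory)
    (hdiv : ∀ (K L : Type) [Field K] [Field L] [NumberField K] [NumberField L]
      [Algebra K L] [IsGalois K L],
      ∃ D : T.Br K, T.res (algebraMap K L) D = 1 ∧ orderOf D = Module.finrank K L)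
    (hexp : ∀ (K L : Type) [Field K] [Field L] [NumberField K] [NumberField L]
      [Algebra K L] [IsGalois K L] (D : T.Br K),
      T.res (algebraMap K L) D = 1 → orderOf D ∣ Module.finrank K L)
    (k k' : Type) [Field k] [Field k'] [NumberField k] [NumberField k']
    (h : BrauerEquivalent T k k') :
    Module.finrank ℚ k = Module.finrank ℚ k' := by
  obtain ⟨Φ, -, hres⟩ := h
  obtain ⟨L, _, _, _, _, _, _⟩ := NumberField.exists_common_isGalois_extension k k'
  have hres_symm (y : T.Br k') :
      T.res (algebraMap k L) (Φ.symm y) = T.res (algebraMap k' L) y := by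
    rw [← hres L, Φ.apply_symm_apply]
  have hdeg : finrank k L = finrank k' L := Nat.dvd_antisymm
    (T.finrank_dvd_of_res_comp_mulEquiv Φ (hres L) (hdiv k L) (hexp k' L))
    (T.finrank_dvd_of_res_comp_mulEquiv Φ.symm hres_symm (hdiv k' L) (hexp k L))
  apply Nat.eq_of_mul_eq_mul_right (finrank_pos (R := k) (M := L))
  rw [finrank_mul_finrank, hdeg, finrank_mul_finrank]

end
end

section
/- If k and k' are Brauer equivalent number fields and k/ℚ is Galois, then k ≅ k'. -/
/- Preliminary definitions: an abstract Brauer-group theory (the Brauer group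
functor together with restriction maps and the class map on algebras), Brauer
equivalence of number fields, quaternion algebras, ramification at finite and
infinite places, splitting of rational primes, orders, etc. -/

open NumberField Module IsDedekindDomain
open scoped TensorProduct

noncomputable section

theorem galoisKernel_eq_top (k : Type) [Field k] [NumberField k] [IsGalois ℚ k] :
    galoisKernel k = ⊤ :=
  top_le_iff.mp <| le_iSup₂_of_le (⊤ : IntermediateField ℚ k)
    (IsGalois.of_algEquiv IntermediateField.topEquiv.symm) le_rfl

theorem IntermediateField.eq_top_of_finrank_eq {F L : Type*} [Field F] [Field L] [Algebra F L]
    [FiniteDimensional F L] {E : IntermediateField F L} (h : finrank F E = finrank F L) :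
    E = ⊤ :=
  eq_of_le_of_finrank_eq le_top (h.trans IntermediateField.finrank_top'.symm)

theorem IntermediateField.nonempty_algEquiv_of_algEquiv_of_finrank_eq
    {F K L : Type*} [Field F] [Field K] [Field L] [Algebra F K] [Algebra F L]
    [FiniteDimensional F L] {E : IntermediateField F L} (e : K ≃ₐ[F] E)
    (h : finrank F K = finrank F L) : Nonempty (K ≃ₐ[F] L) :=
  have hE : E = ⊤ := eq_top_of_finrank_eq (e.toLinearEquiv.finrank_eq.symm.trans h)
  ⟨(e.trans (equivOfEq hE)).trans topEquiv⟩

/-- If `k` and `k'` are Brauer equivalent number fields and `k/ℚ`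
is Galois, then `k ≅ k'`.  One may assume the previous results: Brauer
equivalent number fields have the same degree over `ℚ` and isomorphic Galois
kernels. -/
theorem brauerEquivalent_iso_of_isGalois (T : BrauerTheory)
    (hdeg : ∀ (K K' : Type) [Field K] [Field K'] [NumberField K] [NumberField K'],
      BrauerEquivalent T K K' → Module.finrank ℚ K = Module.finrank ℚ K')
    (hker : ∀ (K K' : Type) [Field K] [Field K'] [NumberField K] [NumberField K'],
      BrauerEquivalent T K K' →
      Nonempty ((galoisKernel K) ≃ₐ[ℚ] (galoisKernel K')))
    (k k' : Type) [Field k] [Field k'] [NumberField k] [NumberField k']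
    [IsGalois ℚ k] (h : BrauerEquivalent T k k') :
    Nonempty (k ≃ₐ[ℚ] k') := by
  obtain ⟨e⟩ := hker k k' h
  have ek : galoisKernel k ≃ₐ[ℚ] k :=
    (IntermediateField.equivOfEq (galoisKernel_eq_top k)).trans IntermediateField.topEquiv
  exact IntermediateField.nonempty_algEquiv_of_algEquiv_of_finrank_eq (ek.symm.trans e)
    (hdeg k k' h)

end
end

section
/- If k and k' are Brauer equivalent number fields, then k and k' contain the same roots of unity, i.e., their groups of roots of unity are isomorphic. -/
/- Preliminary definitions: an abstract Brauer-group theory (the Brauer group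
functor together with restriction maps and the class map on algebras), Brauer
equivalence of number fields, quaternion algebras, ramification at finite and
infinite places, splitting of rational primes, orders, etc. -/

open NumberField Module IsDedekindDomain
open scoped TensorProduct

noncomputable section

/-! Every root of unity `ζ` of a number field `k` generates a cyclotomic, hence Galois, subfield
`ℚ(ζ)`, so it lies in the Galois kernel of `k`. Thus the roots of unity of `k` are those of its
Galois kernel, and Brauer equivalent fields have isomorphic Galois kernels. -/

namespace CommGroup

variable {G H : Type*} [CommGroup G] [CommGroup H]

theorem map_torsion_of_injective {f : G →* H} (hf : Function.Injective f)
    (hrange : torsion H ≤ f.range) : (torsion G).map f = torsion H := by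
  rw [← comap_torsion_of_injective hf, Subgroup.map_comap_eq, inf_eq_right.mpr hrange]

def torsionEquivOfInjective {f : G →* H} (hf : Function.Injective f)
    (hrange : torsion H ≤ f.range) : torsion G ≃* torsion H :=
  ((torsion G).equivMapOfInjective f hf).trans
    (MulEquiv.subgroupCongr (map_torsion_of_injective hf hrange))

def torsionCongr (e : G ≃* H) : torsion G ≃* torsion H :=
  (e.subgroupMap (torsion G)).trans (MulEquiv.subgroupCongr e.map_torsion)

end CommGroup

open scoped IntermediateField

theorem IsPrimitiveRoot.isGalois_adjoin {K L : Type*} [Field K] [Field L] [Algebra K L]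
    [Algebra.IsIntegral K L] {n : ℕ} [NeZero (n : K)] {ζ : L} (hζ : IsPrimitiveRoot ζ n) :
    IsGalois K K⟮ζ⟯ :=
  have : NeZero n := NeZero.of_map (Nat.castRingHom K)
  have := hζ.intermediateField_adjoin_isCyclotomicExtension K
  IsCyclotomicExtension.isGalois {n} K _

theorem mem_galoisKernel_of_isOfFinOrder {k : Type} [Field k] [NumberField k] {x : kˣ}
    (hx : IsOfFinOrder x) : (x : k) ∈ galoisKernel k := by
  have : NeZero ((orderOf x : ℕ) : ℚ) := ⟨by exact_mod_cast hx.orderOf_pos.ne'⟩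
  have hζ : IsPrimitiveRoot (x : k) (orderOf x) :=
    IsPrimitiveRoot.coe_units_iff.mpr (IsPrimitiveRoot.orderOf x)
  have hle : ℚ⟮(x : k)⟯ ≤ galoisKernel k :=
    le_iSup₂ (f := fun (E : IntermediateField ℚ k) (_ : IsGalois ℚ E) ↦ E) _ hζ.isGalois_adjoin
  exact hle (IntermediateField.mem_adjoin_simple_self ℚ _)

theorem torsion_le_range_units_map_galoisKernel (k : Type) [Field k] [NumberField k] :
    CommGroup.torsion kˣ ≤ (Units.map (galoisKernel k).val.toMonoidHom).range := fun x hx ↦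
  ⟨Units.mk0 ⟨x, mem_galoisKernel_of_isOfFinOrder hx⟩ (Subtype.coe_ne_coe.mp x.ne_zero),
    Units.ext rfl⟩

def galoisKernelTorsionEquiv (k : Type) [Field k] [NumberField k] :
    CommGroup.torsion (galoisKernel k)ˣ ≃* CommGroup.torsion kˣ :=
  CommGroup.torsionEquivOfInjective (Units.map_injective (galoisKernel k).val.injective)
    (torsion_le_range_units_map_galoisKernel k)

/-- Brauer equivalent number fields have isomorphic groups of
roots of unity (that is, isomorphic torsion subgroups of their unit groups).
One may use the previously established fact that Brauer equivalent number
fields have isomorphic Galois kernels. -/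
theorem brauerEquivalent_rootsOfUnity_iso (T : BrauerTheory)
    (hker : ∀ (K K' : Type) [Field K] [Field K'] [NumberField K] [NumberField K'],
      BrauerEquivalent T K K' →
      Nonempty ((galoisKernel K) ≃ₐ[ℚ] (galoisKernel K')))
    (k k' : Type) [Field k] [Field k'] [NumberField k] [NumberField k']
    (h : BrauerEquivalent T k k') :
    Nonempty ((CommGroup.torsion kˣ) ≃* (CommGroup.torsion k'ˣ)) := by
  obtain ⟨e⟩ := hker k k' h
  exact ⟨(galoisKernelTorsionEquiv k).symm.trans
    ((CommGroup.torsionCongr (Units.mapEquiv e.toMulEquiv)).trans (galoisKernelTorsionEquiv k'))⟩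

end
end

section
/- Let k and k' be Brauer equivalent number fields and p a rational prime such that p splits completely in the Galois closure of k over ℚ and p is unramified in k'. Then every prime of the Galois kernel k'₀ of k' above p has inertia degree 1; in particular p splits completely in k'₀/ℚ. -/
/- Preliminary definitions: an abstract Brauer-group theory (the Brauer group
functor together with restriction maps and the class map on algebras), Brauer
equivalence of number fields, quaternion algebras, ramification at finite and
infinite places, splitting of rational primes, orders, etc. -/

open NumberField Module IsDedekindDomain
open scoped TensorProduct

noncomputable section

/-! If `p` splits completely in the Galois closure of `k`, it splits completely in `k`, so every
inertia degree of `k` over `p` is `1`. Let `P` be a prime of the Galois kernel `k'₀` above `p`. For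
every prime `Q` of `k'` above `p`, `f(P)` equals the inertia degree of the prime of `k'₀` below `Q`
(all primes of the Galois field `k'₀` above `p` have the same inertia degree), which divides `f(Q)`
by multiplicativity in the tower `k'/k'₀/ℚ`. The gcd theorem transfers this divisibility to `k`,
whence `f(P) = 1`. Unramifiedness descends from `k'` to `k'₀` in the same way. -/

section PrimesOverRationalPrime

variable {p : ℕ} {K : Type} [Field K] [NumberField K]

theorem mem_PrimesOver_iff (hp : p.Prime) {P : Ideal (𝓞 K)} :
    P ∈ PrimesOver K p ↔ P ∈ (Ideal.span {(p : ℤ)}).primesOver (𝓞 K) := by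
  have hp' := Nat.prime_iff_prime_int.mp hp
  refine ⟨fun ⟨hP, _, hpP⟩ ↦ ⟨hP, (Ideal.liesOver_span_iff hP.ne_top hp').mpr (by simpa using hpP)⟩,
    fun ⟨hP, hlies⟩ ↦ ?_⟩
  have hpP : (p : 𝓞 K) ∈ P := by simpa using (Ideal.liesOver_span_iff hP.ne_top hp').mp hlies
  refine ⟨hP, fun hbot ↦ ?_, hpP⟩
  rw [hbot, Ideal.mem_bot] at hpP
  exact hp.ne_zero (by exact_mod_cast hpP)

theorem PrimesOver.nonempty (hp : p.Prime) : (PrimesOver K p).Nonempty := by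
  have := (Nat.prime_iff_prime_int.mp hp).isMaximal_span_singleton
  obtain ⟨P, hP⟩ := (Ideal.span {(p : ℤ)}).nonempty_primesOver (S := 𝓞 K)
  exact ⟨P, (mem_PrimesOver_iff hp).mpr hP⟩

theorem inertiaDegOver_eq_inertiaDeg (hp : p.Prime) {P : Ideal (𝓞 K)} (hP : P ∈ PrimesOver K p) :
    inertiaDegOver K p P = P.inertiaDeg ℤ := by
  obtain ⟨_, _⟩ := (mem_PrimesOver_iff hp).mp hP
  have := hP.1.isMaximal hP.2.1
  have := (Nat.prime_iff_prime_int.mp hp).isMaximal_span_singleton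
  have hcard : Nat.card (𝓞 K ⧸ P) = p ^ P.inertiaDeg ℤ := by
    rw [← Submodule.cardQuot_apply, ← Ideal.cardQuot_pow_inertiaDeg (Ideal.span {(p : ℤ)}) P,
      Submodule.cardQuot_apply, Int.card_ideal_quot]
  rw [inertiaDegOver, hcard, Nat.factorization_pow, Finsupp.smul_apply, hp.factorization_self,
    smul_eq_mul, mul_one]

theorem ramIdxOver_eq_ramificationIdx (hp : p.Prime) {P : Ideal (𝓞 K)}
    (hP : P ∈ PrimesOver K p) : ramIdxOver K p P = P.ramificationIdx ℤ := by
  obtain ⟨_, _⟩ := (mem_PrimesOver_iff hp).mp hP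
  exact Ideal.ramificationIdx'_eq_ramificationIdx _ P (by simpa using hp.ne_zero)

end PrimesOverRationalPrime

section Tower

variable {p : ℕ} {F K : Type} [Field F] [Field K] [NumberField F] [NumberField K] [Algebra F K]

theorem exists_mem_PrimesOver_liesOver (hp : p.Prime) {P₀ : Ideal (𝓞 F)}
    (hP₀ : P₀ ∈ PrimesOver F p) : ∃ P ∈ PrimesOver K p, P.LiesOver P₀ := by
  obtain ⟨_, _⟩ := (mem_PrimesOver_iff hp).mp hP₀
  obtain ⟨P, hP, hPP₀⟩ := P₀.nonempty_primesOver (S := 𝓞 K)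
  have : P.LiesOver (Ideal.span {(p : ℤ)}) := Ideal.LiesOver.trans P P₀ _
  exact ⟨P, (mem_PrimesOver_iff hp).mpr ⟨hP, this⟩, hPP₀⟩

theorem under_mem_PrimesOver (hp : p.Prime) {P : Ideal (𝓞 K)} (hP : P ∈ PrimesOver K p) :
    P.under (𝓞 F) ∈ PrimesOver F p := by
  obtain ⟨_, _⟩ := (mem_PrimesOver_iff hp).mp hP
  exact (mem_PrimesOver_iff hp).mpr ⟨inferInstance, Ideal.LiesOver.tower_bot P _ _⟩

theorem ramIdxOver_dvd_of_liesOver (hp : p.Prime) {P₀ : Ideal (𝓞 F)} {P : Ideal (𝓞 K)}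
    (hP₀ : P₀ ∈ PrimesOver F p) (hP : P ∈ PrimesOver K p) [P.LiesOver P₀] :
    ramIdxOver F p P₀ ∣ ramIdxOver K p P := by
  rw [ramIdxOver_eq_ramificationIdx hp hP₀, ramIdxOver_eq_ramificationIdx hp hP]
  exact Ideal.ramificationIdx_below_dvd P₀ P

theorem inertiaDegOver_dvd_of_liesOver (hp : p.Prime) {P₀ : Ideal (𝓞 F)} {P : Ideal (𝓞 K)}
    (hP₀ : P₀ ∈ PrimesOver F p) (hP : P ∈ PrimesOver K p) [P.LiesOver P₀] :
    inertiaDegOver F p P₀ ∣ inertiaDegOver K p P := by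
  rw [inertiaDegOver_eq_inertiaDeg hp hP₀, inertiaDegOver_eq_inertiaDeg hp hP]
  exact Ideal.inertiaDeg_below_dvd P₀ P

theorem UnramifiedIn.of_algebra (hp : p.Prime) (h : UnramifiedIn K p) : UnramifiedIn F p := by
  intro P₀ hP₀
  obtain ⟨P, hP, _⟩ := exists_mem_PrimesOver_liesOver (K := K) hp hP₀
  exact Nat.dvd_one.mp (h P hP ▸ ramIdxOver_dvd_of_liesOver hp hP₀ hP)

theorem SplitsCompletely.of_algebra (hp : p.Prime) (h : SplitsCompletely K p) :
    SplitsCompletely F p := by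
  intro P₀ hP₀
  obtain ⟨P, hP, _⟩ := exists_mem_PrimesOver_liesOver (K := K) hp hP₀
  exact ⟨Nat.dvd_one.mp ((h P hP).1 ▸ ramIdxOver_dvd_of_liesOver hp hP₀ hP),
    Nat.dvd_one.mp ((h P hP).2 ▸ inertiaDegOver_dvd_of_liesOver hp hP₀ hP)⟩

theorem inertiaDegOver_eq_of_isGalois [IsGalois ℚ K] (hp : p.Prime) {P Q : Ideal (𝓞 K)}
    (hP : P ∈ PrimesOver K p) (hQ : Q ∈ PrimesOver K p) :
    inertiaDegOver K p P = inertiaDegOver K p Q := by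
  obtain ⟨_, _⟩ := (mem_PrimesOver_iff hp).mp hP
  obtain ⟨_, _⟩ := (mem_PrimesOver_iff hp).mp hQ
  rw [inertiaDegOver_eq_inertiaDeg hp hP, inertiaDegOver_eq_inertiaDeg hp hQ]
  exact Ideal.inertiaDeg_eq_of_isGaloisGroup (Ideal.span {(p : ℤ)}) P Q (K ≃ₐ[ℚ] K)

theorem inertiaDegOver_dvd_of_isGalois [IsGalois ℚ F] (hp : p.Prime) {P₀ : Ideal (𝓞 F)}
    {P : Ideal (𝓞 K)} (hP₀ : P₀ ∈ PrimesOver F p) (hP : P ∈ PrimesOver K p) :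
    inertiaDegOver F p P₀ ∣ inertiaDegOver K p P :=
  inertiaDegOver_eq_of_isGalois hp hP₀ (under_mem_PrimesOver hp hP) ▸
    inertiaDegOver_dvd_of_liesOver hp (under_mem_PrimesOver hp hP) hP

end Tower

theorem isGalois_galoisKernel (k : Type) [Field k] [NumberField k] :
    IsGalois ℚ (galoisKernel k) := by
  have hsup : galoisKernel k = ⨆ E : {E : IntermediateField ℚ k // IsGalois ℚ E}, E.1 := by
    rw [galoisKernel, iSup_subtype]
    rfl
  have : Normal ℚ (galoisKernel k) := by
    rw [hsup]
    exact IntermediateField.normal_iSup ℚ k _ (h := fun E ↦ E.2.to_normal)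
  exact ⟨⟩

theorem splitsCompletely_galoisKernel_of_brauerEquivalent_general
    (k k' : Type) [Field k] [Field k'] [NumberField k] [NumberField k']
    (hgcd : ∀ q : ℕ, q.Prime → UnramifiedIn k q → UnramifiedIn k' q →
      ∀ d : ℕ, (∀ P ∈ PrimesOver k q, d ∣ inertiaDegOver k q P) ↔
               (∀ P ∈ PrimesOver k' q, d ∣ inertiaDegOver k' q P))
    (p : ℕ) (hp : p.Prime)
    (hsplit : SplitsCompletely (↥(IntermediateField.normalClosure ℚ k (AlgebraicClosure k))) p)
    (hunram : UnramifiedIn k' p) :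
    (∀ P ∈ PrimesOver (↥(galoisKernel k')) p, inertiaDegOver (↥(galoisKernel k')) p P = 1) ∧
    SplitsCompletely (↥(galoisKernel k')) p := by
  have := NumberField.of_module_finite ℚ (IntermediateField.normalClosure ℚ k (AlgebraicClosure k))
  have := isGalois_galoisKernel k'
  have hk : SplitsCompletely k p := hsplit.of_algebra hp
  have hf : ∀ P ∈ PrimesOver (galoisKernel k') p, inertiaDegOver (galoisKernel k') p P = 1 := by
    intro P hP
    obtain ⟨Q, hQ⟩ := PrimesOver.nonempty (K := k) hp
    have hdvd := (hgcd p hp (fun P hP ↦ (hk P hP).1) hunram _).mpr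
      (fun P' hP' ↦ inertiaDegOver_dvd_of_isGalois hp hP hP') Q hQ
    exact Nat.dvd_one.mp ((hk Q hQ).2 ▸ hdvd)
  exact ⟨hf, fun P hP ↦ ⟨hunram.of_algebra hp P hP, hf P hP⟩⟩

/-- If `k` and `k'` are Brauer equivalent and the rational prime
`p` splits completely in the Galois closure of `k/ℚ` and is unramified in `k'`,
then every prime of the Galois kernel `k'₀` of `k'` above `p` has inertia
degree one; in particular `p` splits completely in `k'₀/ℚ`.  The gcd theorem of
Linowitz–McReynolds–Miller may be assumed. -/
theorem splitsCompletely_galoisKernel_of_brauerEquivalent (T : BrauerTheory)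
    (k k' : Type) [Field k] [Field k'] [NumberField k] [NumberField k']
    (h : BrauerEquivalent T k k')
    (hgcd : ∀ q : ℕ, q.Prime → UnramifiedIn k q → UnramifiedIn k' q →
      ∀ d : ℕ, (∀ P ∈ PrimesOver k q, d ∣ inertiaDegOver k q P) ↔
               (∀ P ∈ PrimesOver k' q, d ∣ inertiaDegOver k' q P))
    (p : ℕ) (hp : p.Prime)
    (hsplit : SplitsCompletely (↥(IntermediateField.normalClosure ℚ k (AlgebraicClosure k))) p)
    (hunram : UnramifiedIn k' p) :
    (∀ P ∈ PrimesOver (↥(galoisKernel k')) p, inertiaDegOver (↥(galoisKernel k')) p P = 1) ∧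
    SplitsCompletely (↥(galoisKernel k')) p :=
  splitsCompletely_galoisKernel_of_brauerEquivalent_general k k' hgcd p hp hsplit hunram

end
end
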